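/- arXiv:1510.03249 — 6 statements merged into one kernel-verified Lean document; each statement's English description precedes it below -/
import Mathlib

section
/- The function F(x) := √(1 - sat(x)) is (1/(2ε))-Lipschitz on ℝ: |F(x) - F(y)| ≤ (1/(2ε))·|x - y| for all x, y. -/
noncomputable def sat (ε x : ℝ) : ℝ :=
  if x = 0 then 0 else min 1 ((1 - ε ^ 2) / |x|) * x

noncomputable def F (ε x : ℝ) : ℝ := Real.sqrt (1 - sat ε x)

lemma sat_eq_clamp (ε : ℝ) (hε0 : 0 < ε) (hε1 : ε < 1) (x : ℝ) :
    sat ε x = max (-(1 - ε ^ 2)) (min (1 - ε ^ 2) x) := by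
  have hc : 0 < 1 - ε ^ 2 := by nlinarith
  unfold sat
  rcases eq_or_ne x 0 with h | h
  · subst h
    rw [if_pos rfl, min_eq_right hc.le, max_eq_right (by linarith)]
  · rw [if_neg h]
    rcases le_or_gt (|x|) (1 - ε ^ 2) with hle | hlt
    · have h1 : (1 : ℝ) ≤ (1 - ε ^ 2) / |x| :=
        (one_le_div (abs_pos.mpr h)).mpr hle
      rw [min_eq_left h1, one_mul]
      rcases abs_cases x with ⟨hx, _⟩ | ⟨hx, _⟩
      · rw [min_eq_right (by linarith), max_eq_right (by linarith)]
      · rw [max_eq_right]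
        · rw [min_eq_right (by linarith)]
        · rw [min_eq_right (by linarith)]; linarith
    · have h1 : (1 - ε ^ 2) / |x| ≤ 1 :=
        (div_le_one (abs_pos.mpr h)).mpr (le_of_lt hlt)
      rw [min_eq_right h1]
      rcases abs_cases x with ⟨hx, hx0⟩ | ⟨hx, hx0⟩
      · have h1' : (1 - ε ^ 2) / |x| * x = 1 - ε ^ 2 := by
          rw [hx]; field_simp
        rw [h1', min_eq_left (by rw [hx] at hlt; linarith),
          max_eq_right (by linarith)]
      · have h1' : (1 - ε ^ 2) / |x| * x = -(1 - ε ^ 2) := by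
          rw [abs_of_neg hx0, div_neg, neg_mul, div_mul_cancel₀ _ h]
        rw [h1', max_eq_left]
        rw [min_eq_right]; · linarith
        · rw [abs_of_neg hx0] at hlt; linarith

lemma sat_le (ε : ℝ) (hε0 : 0 < ε) (hε1 : ε < 1) (x : ℝ) :
    sat ε x ≤ 1 - ε ^ 2 := by
  rw [sat_eq_clamp ε hε0 hε1]
  have hc : 0 < 1 - ε ^ 2 := by nlinarith
  exact max_le (by linarith) (min_le_left _ _)

lemma sat_lip (ε : ℝ) (hε0 : 0 < ε) (hε1 : ε < 1) (x y : ℝ) :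
    |sat ε x - sat ε y| ≤ |x - y| := by
  rw [sat_eq_clamp ε hε0 hε1, sat_eq_clamp ε hε0 hε1]
  calc |max (-(1 - ε ^ 2)) (min (1 - ε ^ 2) x) - max (-(1 - ε ^ 2)) (min (1 - ε ^ 2) y)|
      ≤ |min (1 - ε ^ 2) x - min (1 - ε ^ 2) y| := by
        rw [max_comm (-(1 - ε ^ 2)), max_comm (-(1 - ε ^ 2))]
        exact abs_max_sub_max_le_abs _ _ _
    _ ≤ max |(1 - ε ^ 2) - (1 - ε ^ 2)| |x - y| := abs_min_sub_min_le_max _ _ _ _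
    _ = |x - y| := by simp [abs_nonneg]

theorem F_lipschitz (ε : ℝ) (hε0 : 0 < ε) (hε1 : ε < 1) (x y : ℝ) :
    |F ε x - F ε y| ≤ (1 / (2 * ε)) * |x - y| := by
  set a := 1 - sat ε x with ha
  set b := 1 - sat ε y with hb
  have haε : ε ^ 2 ≤ a := by have := sat_le ε hε0 hε1 x; linarith
  have hbε : ε ^ 2 ≤ b := by have := sat_le ε hε0 hε1 y; linarith
  have ha0 : 0 ≤ a := le_trans (by positivity) haε
  have hb0 : 0 ≤ b := le_trans (by positivity) hbε
  have hsa : ε ≤ Real.sqrt a := by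
    rw [show ε = Real.sqrt (ε ^ 2) by rw [Real.sqrt_sq hε0.le]]
    exact Real.sqrt_le_sqrt haε
  have hsb : ε ≤ Real.sqrt b := by
    rw [show ε = Real.sqrt (ε ^ 2) by rw [Real.sqrt_sq hε0.le]]
    exact Real.sqrt_le_sqrt hbε
  have key : |Real.sqrt a - Real.sqrt b| * (Real.sqrt a + Real.sqrt b) = |a - b| := by
    rw [← abs_of_nonneg (show (0:ℝ) ≤ Real.sqrt a + Real.sqrt b by positivity),
      ← abs_mul]
    congr 1
    ring_nf
    rw [Real.sq_sqrt ha0, Real.sq_sqrt hb0]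
  have hab : |a - b| = |sat ε x - sat ε y| := by
    rw [ha, hb, show 1 - sat ε x - (1 - sat ε y) = -(sat ε x - sat ε y) by ring,
      abs_neg]
  have hlip : |a - b| ≤ |x - y| := hab ▸ sat_lip ε hε0 hε1 x y
  have h2 : |Real.sqrt a - Real.sqrt b| * (2 * ε) ≤ |x - y| := by
    calc |Real.sqrt a - Real.sqrt b| * (2 * ε)
        ≤ |Real.sqrt a - Real.sqrt b| * (Real.sqrt a + Real.sqrt b) := by
          apply mul_le_mul_of_nonneg_left (by linarith) (abs_nonneg _)
      _ = |a - b| := key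
      _ ≤ |x - y| := hlip
  have hε2 : 0 < 2 * ε := by linarith
  rw [F, F, ← ha, ← hb]
  exact ((le_div_iff₀ hε2).mpr h2).trans_eq (by ring)
end

section
/- If η₁² + η₂² + η₃² = 1 and η₃ ≥ ε > 0, then for all real z₁, z₂, setting A := η₃ - F((η₁+z₁)² + (η₂+z₂)²) with F(x) = √(1-sat(x)), one has |A| ≤ (1/(2ε))·|z₁(2η₁+z₁) + z₂(2η₂+z₂)|. -/
lemma sat_nonneg_eq (ε x : ℝ) (hε : ε ^ 2 ≤ 1) (hx : 0 ≤ x) :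
    sat ε x = min x (1 - ε ^ 2) := by
  unfold sat
  rcases eq_or_lt_of_le hx with h | h
  · rw [if_pos h.symm, ← h, min_eq_left (by linarith)]
  · rw [if_neg h.ne', abs_of_pos h, min_mul_of_nonneg _ _ hx, one_mul,
      div_mul_cancel₀ _ h.ne']

lemma F_eq (ε x : ℝ) (hε : ε ^ 2 ≤ 1) (hx : 0 ≤ x) : F ε x = Real.sqrt (max (1 - x) (ε ^ 2)) := by
  rw [F, sat_nonneg_eq ε x hε hx]
  congr 1
  rcases le_total x (1 - ε ^ 2) with h | h
  · rw [min_eq_left h, max_eq_left (by linarith)]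
  · rw [min_eq_right h, max_eq_right (by linarith)]
    ring

lemma sqrt_diff_bound (ε a b : ℝ) (hε : 0 < ε) (ha : ε ^ 2 ≤ a) (hb : ε ^ 2 ≤ b) :
    |Real.sqrt a - Real.sqrt b| ≤ |a - b| / (2 * ε) := by
  have ha0 : 0 ≤ a := le_trans (by positivity) ha
  have hb0 : 0 ≤ b := le_trans (by positivity) hb
  have hsa : ε ≤ Real.sqrt a := by
    rw [show ε = Real.sqrt (ε ^ 2) from (Real.sqrt_sq hε.le).symm]
    exact Real.sqrt_le_sqrt ha
  have hsb : ε ≤ Real.sqrt b := by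
    rw [show ε = Real.sqrt (ε ^ 2) from (Real.sqrt_sq hε.le).symm]
    exact Real.sqrt_le_sqrt hb
  have key : |Real.sqrt a - Real.sqrt b| * (Real.sqrt a + Real.sqrt b) = |a - b| := by
    rw [← abs_of_nonneg (by linarith : (0:ℝ) ≤ Real.sqrt a + Real.sqrt b), ← abs_mul]
    congr 1
    have := Real.sq_sqrt ha0
    have := Real.sq_sqrt hb0
    ring_nf
    nlinarith [Real.sq_sqrt ha0, Real.sq_sqrt hb0]
  rw [← key, le_div_iff₀ (by positivity : (0:ℝ) < 2 * ε)]
  exact mul_le_mul_of_nonneg_left (by linarith) (abs_nonneg _)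

theorem A_abs_bound (ε η₁ η₂ η₃ : ℝ) (hε0 : 0 < ε) (hε1 : ε < 1)
    (hconstraint : η₁ ^ 2 + η₂ ^ 2 + η₃ ^ 2 = 1) (hη₃ : η₃ ≥ ε)
    (z₁ z₂ : ℝ) :
    |η₃ - F ε ((η₁ + z₁) ^ 2 + (η₂ + z₂) ^ 2)| ≤
      (1 / (2 * ε)) * |z₁ * (2 * η₁ + z₁) + z₂ * (2 * η₂ + z₂)| := by
  set u : ℝ := η₁ ^ 2 + η₂ ^ 2 with hu
  set v : ℝ := (η₁ + z₁) ^ 2 + (η₂ + z₂) ^ 2 with hv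
  set d : ℝ := z₁ * (2 * η₁ + z₁) + z₂ * (2 * η₂ + z₂) with hd
  have hvd : v = u + d := by rw [hv, hu, hd]; ring
  have hη₃0 : 0 < η₃ := lt_of_lt_of_le hε0 hη₃
  have hu1 : 1 - u = η₃ ^ 2 := by rw [hu]; linarith
  have hεu : ε ^ 2 ≤ 1 - u := by
    rw [hu1]; nlinarith
  have hη₃eq : η₃ = Real.sqrt (max (1 - u) (ε ^ 2)) := by
    rw [max_eq_left hεu, hu1, Real.sqrt_sq hη₃0.le]
  have hv0 : 0 ≤ v := by positivity
  rw [F_eq ε v (by nlinarith) hv0, hη₃eq]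
  have := sqrt_diff_bound ε (max (1 - u) (ε ^ 2)) (max (1 - v) (ε ^ 2)) hε0
    (le_max_right _ _) (le_max_right _ _)
  have hmax : |max (1 - u) (ε ^ 2) - max (1 - v) (ε ^ 2)| ≤ |d| := by
    have h1 : |max (1 - u) (ε ^ 2) - max (1 - v) (ε ^ 2)| ≤ |(1 - u) - (1 - v)| :=
      abs_max_sub_max_le_abs _ _ _
    have h2 : |(1 - u) - (1 - v)| = |d| := by rw [hvd]; congr 1; ring
    linarith
  calc |Real.sqrt (max (1 - u) (ε ^ 2)) - Real.sqrt (max (1 - v) (ε ^ 2))|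
      ≤ |max (1 - u) (ε ^ 2) - max (1 - v) (ε ^ 2)| / (2 * ε) := this
    _ ≤ |d| / (2 * ε) := by
        apply div_le_div_of_nonneg_right hmax (by positivity) |>.trans_eq rfl
    _ = 1 / (2 * ε) * |d| := by ring
end

section
/- Under the constraint η₁²+η₂²+η₃² = 1 with η₃ ≥ ε > 0, for all real z₁, z₂ the quantity A := η₃ - F((η₁+z₁)²+(η₂+z₂)²) satisfies A² ≤ (z₁²/ε²)·((η₁+z₁)² + 1 - ε²) + (z₂²/ε²)·((η₂+z₂)² + 1 - ε²). -/
set_option maxHeartbeats 1600000 in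
theorem A_sq_bound (ε η₁ η₂ η₃ : ℝ) (hε0 : 0 < ε) (hε1 : ε < 1)
    (hconstraint : η₁ ^ 2 + η₂ ^ 2 + η₃ ^ 2 = 1) (hη₃ : η₃ ≥ ε)
    (z₁ z₂ : ℝ) :
    (η₃ - F ε ((η₁ + z₁) ^ 2 + (η₂ + z₂) ^ 2)) ^ 2 ≤
      (z₁ ^ 2 / ε ^ 2) * ((η₁ + z₁) ^ 2 + 1 - ε ^ 2) +
      (z₂ ^ 2 / ε ^ 2) * ((η₂ + z₂) ^ 2 + 1 - ε ^ 2) := by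
  set w₁ := η₁ + z₁ with hw₁
  set w₂ := η₂ + z₂ with hw₂
  set s := w₁ ^ 2 + w₂ ^ 2 with hs
  set r := η₁ ^ 2 + η₂ ^ 2 with hr
  have hεsq : ε ^ 2 < 1 := by nlinarith
  -- rewrite F
  have hF : F ε s = Real.sqrt (max (1 - s) (ε ^ 2)) := by
    unfold F sat
    by_cases h : s = 0
    · rw [if_pos h]
      rw [max_eq_left (by nlinarith : ε ^ 2 ≤ 1 - s)]
      simp [h]
    · have hspos : 0 < s := lt_of_le_of_ne (by positivity) (Ne.symm h)
      rw [if_neg h, abs_of_pos hspos]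
      congr 1
      rcases le_total s (1 - ε ^ 2) with hle | hle
      · have : (1 : ℝ) ≤ (1 - ε ^ 2) / s := (le_div_iff₀ hspos).2 (by linarith)
        rw [min_eq_left this, one_mul, max_eq_left (by linarith)]
      · have : (1 - ε ^ 2) / s ≤ 1 := (div_le_one hspos).2 (by linarith)
        rw [min_eq_right this, div_mul_cancel₀ _ (ne_of_gt hspos),
          max_eq_right (by linarith)]
        ring
  rw [hF]
  set t := Real.sqrt (max (1 - s) (ε ^ 2)) with ht
  have htsq : t ^ 2 = max (1 - s) (ε ^ 2) := Real.sq_sqrt (le_max_of_le_right (by positivity))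
  have htε : ε ≤ t := by
    have := Real.sqrt_le_sqrt (le_max_right (1 - s) (ε ^ 2))
    rwa [Real.sqrt_sq hε0.le] at this
  have hη₃sq : η₃ ^ 2 = 1 - r := by rw [hr]; linarith
  have hrle : r ≤ 1 - ε ^ 2 := by nlinarith
  clear_value w₁ w₂ s r t
  -- key: (η₃ - t)^2 * (4 * ε^2) ≤ (s - r)^2
  have hkey : (η₃ - t) ^ 2 * (4 * ε ^ 2) ≤ (s - r) ^ 2 := by
    have hsum : 2 * ε ≤ η₃ + t := by linarith
    have hdiff : (η₃ - t) ^ 2 * (η₃ + t) ^ 2 ≤ (s - r) ^ 2 := by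
      have h1 : (η₃ - t) ^ 2 * (η₃ + t) ^ 2 = (η₃ ^ 2 - t ^ 2) ^ 2 := by ring
      rw [h1, hη₃sq, htsq]
      rcases le_total (ε ^ 2) (1 - s) with h2 | h2
      · rw [max_eq_left h2]; nlinarith
      · rw [max_eq_right h2]; nlinarith
    calc (η₃ - t) ^ 2 * (4 * ε ^ 2) = (η₃ - t) ^ 2 * (2 * ε) ^ 2 := by ring
      _ ≤ (η₃ - t) ^ 2 * (η₃ + t) ^ 2 := by
          apply mul_le_mul_of_nonneg_left _ (sq_nonneg _)
          have h2ε : (0:ℝ) ≤ 2 * ε := by linarith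
          nlinarith
      _ ≤ (s - r) ^ 2 := hdiff
  have hεη : ε ^ 2 ≤ η₃ ^ 2 := pow_le_pow_left₀ hε0.le hη₃ 2
  have hη₁sq : η₁ ^ 2 ≤ 1 - ε ^ 2 := by linarith [hr, hconstraint, sq_nonneg η₂, hεη]
  have hη₂sq : η₂ ^ 2 ≤ 1 - ε ^ 2 := by linarith [hr, hconstraint, sq_nonneg η₁, hεη]
  have hsr : (s - r) ^ 2 ≤ (4 * ε ^ 2) * ((z₁ ^ 2 / ε ^ 2) * (w₁ ^ 2 + 1 - ε ^ 2) +
      (z₂ ^ 2 / ε ^ 2) * (w₂ ^ 2 + 1 - ε ^ 2)) := by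
    have hε2 : (0:ℝ) < ε ^ 2 := by positivity
    have e1 : (4 * ε ^ 2) * ((z₁ ^ 2 / ε ^ 2) * (w₁ ^ 2 + 1 - ε ^ 2) +
        (z₂ ^ 2 / ε ^ 2) * (w₂ ^ 2 + 1 - ε ^ 2)) =
        4 * (z₁ ^ 2 * (w₁ ^ 2 + 1 - ε ^ 2) + z₂ ^ 2 * (w₂ ^ 2 + 1 - ε ^ 2)) := by
      field_simp
    rw [e1]
    have hsr2 : s - r = z₁ * (w₁ + η₁) + z₂ * (w₂ + η₂) := by
      rw [hs, hr, hw₁, hw₂]; ring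
    rw [hsr2]
    have b1 : (w₁ + η₁) ^ 2 ≤ 2 * (w₁ ^ 2 + 1 - ε ^ 2) := by nlinarith [sq_nonneg (w₁ - η₁)]
    have b2 : (w₂ + η₂) ^ 2 ≤ 2 * (w₂ ^ 2 + 1 - ε ^ 2) := by nlinarith [sq_nonneg (w₂ - η₂)]
    have c1 : z₁ ^ 2 * (w₁ + η₁) ^ 2 ≤ z₁ ^ 2 * (2 * (w₁ ^ 2 + 1 - ε ^ 2)) :=
      mul_le_mul_of_nonneg_left b1 (sq_nonneg z₁)
    have c2 : z₂ ^ 2 * (w₂ + η₂) ^ 2 ≤ z₂ ^ 2 * (2 * (w₂ ^ 2 + 1 - ε ^ 2)) :=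
      mul_le_mul_of_nonneg_left b2 (sq_nonneg z₂)
    nlinarith [sq_nonneg (z₁ * (w₁ + η₁) - z₂ * (w₂ + η₂)), c1, c2]
  have hε2 : (0:ℝ) < 4 * ε ^ 2 := by positivity
  have := le_trans hkey hsr
  calc (η₃ - t) ^ 2 = (η₃ - t) ^ 2 * (4 * ε ^ 2) / (4 * ε ^ 2) := by field_simp
    _ ≤ _ := by
        rw [div_le_iff₀ hε2]
        linarith [this]
end

section
/- Suppose η₁²+η₂²+η₃² = 1, η₃ ≥ ε > 0, and let E := (z₃ + A)/B where A := η₃ - F((η₁+z₁)²+(η₂+z₂)²) and B := (η₁+z₁)²+(η₂+z₂)²+1-ε² > 0. Then -z₃·E ≤ -z₃²/(2B) + z₁²/(2ε²) + z₂²/(2ε²). -/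
set_option maxHeartbeats 1000000 in
theorem neg_z3E_bound (ε η₁ η₂ η₃ z₁ z₂ z₃ : ℝ) (hε0 : 0 < ε) (hε1 : ε < 1)
    (hconstraint : η₁ ^ 2 + η₂ ^ 2 + η₃ ^ 2 = 1) (hη₃ : η₃ ≥ ε)
    (hB : (η₁ + z₁) ^ 2 + (η₂ + z₂) ^ 2 + 1 - ε ^ 2 > 0) :
    -z₃ * ((z₃ + (η₃ - F ε ((η₁ + z₁) ^ 2 + (η₂ + z₂) ^ 2))) /
        ((η₁ + z₁) ^ 2 + (η₂ + z₂) ^ 2 + 1 - ε ^ 2)) ≤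
      -z₃ ^ 2 / (2 * ((η₁ + z₁) ^ 2 + (η₂ + z₂) ^ 2 + 1 - ε ^ 2)) +
        z₁ ^ 2 / (2 * ε ^ 2) + z₂ ^ 2 / (2 * ε ^ 2) := by
  set x : ℝ := (η₁ + z₁) ^ 2 + (η₂ + z₂) ^ 2 with hxdef
  have hx0 : (0:ℝ) ≤ x := by rw [hxdef]; positivity
  have hε2 : ε ^ 2 < 1 := by nlinarith
  -- key quadratic bound on A = η₃ - F ε x
  have hA2 : (η₃ - F ε x) ^ 2 * (4 * ε ^ 2) ≤
      (z₁ * (2 * η₁ + z₁) + z₂ * (2 * η₂ + z₂)) ^ 2 := by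
    by_cases hcase : x ≤ 1 - ε ^ 2
    · -- unsaturated case: sat ε x = x
      have hsat : sat ε x = x := by
        unfold sat
        split_ifs with h
        · exact h.symm
        · have hxpos : 0 < x := lt_of_le_of_ne hx0 (Ne.symm h)
          rw [abs_of_pos hxpos, min_eq_left, one_mul]
          rw [le_div_iff₀ hxpos]; linarith
      have h1x : ε ^ 2 ≤ 1 - x := by linarith
      have hF : F ε x = Real.sqrt (1 - x) := by rw [F, hsat]
      set s : ℝ := Real.sqrt (1 - x) with hsdef
      have hs2 : s ^ 2 = 1 - x := Real.sq_sqrt (by nlinarith [sq_nonneg ε])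
      have hsε : ε ≤ s := by
        rw [hsdef]
        have := Real.sqrt_le_sqrt h1x
        rwa [Real.sqrt_sq hε0.le] at this
      have heq : (η₃ - s) * (η₃ + s) = z₁ * (2 * η₁ + z₁) + z₂ * (2 * η₂ + z₂) := by
        have : x = (η₁ + z₁) ^ 2 + (η₂ + z₂) ^ 2 := hxdef
        nlinarith [hs2, hconstraint, this]
      have hSsq : (2 * ε) ^ 2 ≤ (η₃ + s) ^ 2 := by nlinarith
      have hle : (η₃ - s) ^ 2 * (2 * ε) ^ 2 ≤ (η₃ - s) ^ 2 * (η₃ + s) ^ 2 :=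
        mul_le_mul_of_nonneg_left hSsq (sq_nonneg _)
      have hprod : (η₃ - s) ^ 2 * (η₃ + s) ^ 2 =
          (z₁ * (2 * η₁ + z₁) + z₂ * (2 * η₂ + z₂)) ^ 2 := by
        rw [← mul_pow, heq]
      rw [hF]
      nlinarith [hle, hprod]
    · -- saturated case: sat ε x = 1 - ε²
      push_neg at hcase
      have hxpos : 0 < x := by linarith
      have hsat : sat ε x = 1 - ε ^ 2 := by
        unfold sat
        rw [if_neg hxpos.ne', abs_of_pos hxpos, min_eq_right, div_mul_cancel₀]
        · exact hxpos.ne'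
        · rw [div_le_one hxpos]; linarith
      have hF : F ε x = ε := by
        rw [F, hsat]
        have : 1 - (1 - ε ^ 2) = ε ^ 2 := by ring
        rw [this, Real.sqrt_sq hε0.le]
      rw [hF]
      have hA0 : 0 ≤ η₃ - ε := by linarith
      have hnum : 2 * ε * (η₃ - ε) ≤ z₁ * (2 * η₁ + z₁) + z₂ * (2 * η₂ + z₂) := by
        have hx : x = (η₁ + z₁) ^ 2 + (η₂ + z₂) ^ 2 := hxdef
        nlinarith [sq_nonneg (η₃ - ε)]
      have h0 : 0 ≤ 2 * ε * (η₃ - ε) := by positivity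
      nlinarith [mul_le_mul hnum hnum h0 (h0.trans hnum)]
  -- from hA2 deduce A² ε² ≤ (z₁²+z₂²) B
  have hη1sq : η₁ ^ 2 ≤ 1 - ε ^ 2 := by nlinarith [sq_nonneg η₂]
  have hη2sq : η₂ ^ 2 ≤ 1 - ε ^ 2 := by nlinarith [sq_nonneg η₁]
  have hb1 : (2 * η₁ + z₁) ^ 2 ≤ 2 * (x + 1 - ε ^ 2) := by
    have hx : x = (η₁ + z₁) ^ 2 + (η₂ + z₂) ^ 2 := hxdef
    nlinarith [sq_nonneg (η₂ + z₂), sq_nonneg z₁]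
  have hb2 : (2 * η₂ + z₂) ^ 2 ≤ 2 * (x + 1 - ε ^ 2) := by
    have hx : x = (η₁ + z₁) ^ 2 + (η₂ + z₂) ^ 2 := hxdef
    nlinarith [sq_nonneg (η₁ + z₁), sq_nonneg z₂]
  have hn : (z₁ * (2 * η₁ + z₁) + z₂ * (2 * η₂ + z₂)) ^ 2 ≤
      2 * (z₁ ^ 2 * (2 * η₁ + z₁) ^ 2) + 2 * (z₂ ^ 2 * (2 * η₂ + z₂) ^ 2) := by
    nlinarith [sq_nonneg (z₁ * (2 * η₁ + z₁) - z₂ * (2 * η₂ + z₂))]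
  have hc1 : z₁ ^ 2 * (2 * η₁ + z₁) ^ 2 ≤ z₁ ^ 2 * (2 * (x + 1 - ε ^ 2)) :=
    mul_le_mul_of_nonneg_left hb1 (sq_nonneg z₁)
  have hc2 : z₂ ^ 2 * (2 * η₂ + z₂) ^ 2 ≤ z₂ ^ 2 * (2 * (x + 1 - ε ^ 2)) :=
    mul_le_mul_of_nonneg_left hb2 (sq_nonneg z₂)
  have hA2' : (η₃ - F ε x) ^ 2 * ε ^ 2 ≤ (z₁ ^ 2 + z₂ ^ 2) * (x + 1 - ε ^ 2) := by
    nlinarith [hA2, hn, hc1, hc2]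
  -- finish
  have hBne : x + 1 - ε ^ 2 ≠ 0 := by linarith
  have hεne : ε ≠ 0 := hε0.ne'
  have heq : -z₃ * ((z₃ + (η₃ - F ε x)) / (x + 1 - ε ^ 2)) =
      -z₃ ^ 2 / (2 * (x + 1 - ε ^ 2)) + z₁ ^ 2 / (2 * ε ^ 2) + z₂ ^ 2 / (2 * ε ^ 2) -
      (z₃ ^ 2 * ε ^ 2 + 2 * z₃ * (η₃ - F ε x) * ε ^ 2 +
        (z₁ ^ 2 + z₂ ^ 2) * (x + 1 - ε ^ 2)) / (2 * (x + 1 - ε ^ 2) * ε ^ 2) := by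
    field_simp
    ring
  have hnn : 0 ≤ (z₃ ^ 2 * ε ^ 2 + 2 * z₃ * (η₃ - F ε x) * ε ^ 2 +
      (z₁ ^ 2 + z₂ ^ 2) * (x + 1 - ε ^ 2)) / (2 * (x + 1 - ε ^ 2) * ε ^ 2) := by
    apply div_nonneg
    · nlinarith [mul_nonneg (sq_nonneg (z₃ + (η₃ - F ε x))) (sq_nonneg ε), hA2']
    · positivity
  rw [heq]
  linarith [hnn]
end

section
/- Let ε ∈ (0,1) and suppose the gains satisfy k₃ > 0, k₁ > 1 + k₃/(2ε²), k₂ > 1 + k₃/(2ε²), k_u > k₁²c_u²/(2g²) + g²/2, k_v > k₂²c_u²/(2g²) + g²/2. Then the constants k₁₀ := k₁ - 1 - k₃/(2ε²), k₂₀ := k₂ - 1 - k₃/(2ε²), k_{u0} := k_u - k₁²c_u²/(2g²) - g²/2, k_{v0} := k_v - k₂²c_u²/(2g²) - g²/2 are all strictly positive, and for all reals e_u, e_v, z₁, z₂, z₃ and all c ∈ [c_l, c_u] with c_l ≥ 0, and all (η₁,η₂,η₃) with η₁²+η₂²+η₃² = 1, η₃ ≥ ε, the derivative expression D := g e_u z₁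 - (c+k_u)e_u² + g e_v z₂ - (c+k_v)e_v² + (k₁c/g)e_u z₁ - k₁z₁² + (k₂c/g)e_v z₂ - k₂z₂² - k₃z₃·(z₃+A)/B satisfies D ≤ -k₁₀z₁² - k₂₀z₂² - k₃z₃²/(8V + 6(1-ε²)) - k_{u0}e_u² - k_{v0}e_v², where V := (e_u²+e_v²+z₁²+z₂²+z₃²)/2, A := η₃ - √(1 - sat((η₁+z₁)²+(η₂+z₂)²)), B := (η₁+z₁)²+(η₂+z₂)²+1-ε². -/
set_option maxHeartbeats 1000000


lemma young_ineq (a b : ℝ) : a * b ≤ a ^ 2 / 2 + b ^ 2 / 2 := by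
  nlinarith [sq_nonneg (a - b)]

lemma cs_two (a b x y : ℝ) : (a * x + b * y) ^ 2 ≤ (a ^ 2 + b ^ 2) * (x ^ 2 + y ^ 2) := by
  nlinarith [sq_nonneg (a * y - b * x)]

lemma two_sq (a b : ℝ) : (a + b) ^ 2 ≤ 2 * a ^ 2 + 2 * b ^ 2 := by
  nlinarith [sq_nonneg (a - b)]

lemma bb_aux (η₁ η₂ z₁ z₂ t : ℝ) (h : η₁ ^ 2 + η₂ ^ 2 ≤ t) :
    (2 * η₁ + z₁) ^ 2 + (2 * η₂ + z₂) ^ 2 ≤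
      2 * ((η₁ + z₁) ^ 2 + (η₂ + z₂) ^ 2 + t) := by
  nlinarith [sq_nonneg z₁, sq_nonneg z₂]

lemma half_sq (x y : ℝ) : x ^ 2 / 2 - y ^ 2 / 2 ≤ x * (x + y) := by
  nlinarith [sq_nonneg (x + y)]

lemma sat_eq_min (ε x : ℝ) (hx : 0 ≤ x) (h : ε ^ 2 < 1) :
    sat ε x = min x (1 - ε ^ 2) := by
  by_cases hx0 : x = 0
  · subst hx0
    rw [sat, if_pos rfl, min_eq_left (by linarith)]
  · have hx' : 0 < x := lt_of_le_of_ne hx (Ne.symm hx0)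
    rw [sat, if_neg hx0, abs_of_pos hx', min_mul_of_nonneg _ _ hx'.le, one_mul,
      div_mul_cancel₀ _ hx0]

theorem lyapunov_derivative_bound (ε g c_l c_u k₁ k₂ k₃ k_u k_v : ℝ)
    (hε0 : 0 < ε) (hε1 : ε < 1) (hg : 0 < g) (hcl : 0 ≤ c_l)
    (hk₃ : 0 < k₃)
    (hk₁ : k₁ > 1 + k₃ / (2 * ε ^ 2))
    (hk₂ : k₂ > 1 + k₃ / (2 * ε ^ 2))
    (hku : k_u > k₁ ^ 2 * c_u ^ 2 / (2 * g ^ 2) + g ^ 2 / 2)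
    (hkv : k_v > k₂ ^ 2 * c_u ^ 2 / (2 * g ^ 2) + g ^ 2 / 2) :
    (0 < k₁ - 1 - k₃ / (2 * ε ^ 2)) ∧
    (0 < k₂ - 1 - k₃ / (2 * ε ^ 2)) ∧
    (0 < k_u - k₁ ^ 2 * c_u ^ 2 / (2 * g ^ 2) - g ^ 2 / 2) ∧
    (0 < k_v - k₂ ^ 2 * c_u ^ 2 / (2 * g ^ 2) - g ^ 2 / 2) ∧
    ∀ e_u e_v z₁ z₂ z₃ c η₁ η₂ η₃ : ℝ,
      c_l ≤ c → c ≤ c_u →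
      η₁ ^ 2 + η₂ ^ 2 + η₃ ^ 2 = 1 → η₃ ≥ ε →
      g * e_u * z₁ - (c + k_u) * e_u ^ 2 +
        g * e_v * z₂ - (c + k_v) * e_v ^ 2 +
        (k₁ * c / g) * e_u * z₁ - k₁ * z₁ ^ 2 +
        (k₂ * c / g) * e_v * z₂ - k₂ * z₂ ^ 2 -
        k₃ * z₃ * ((z₃ + (η₃ - Real.sqrt (1 - sat ε ((η₁ + z₁) ^ 2 + (η₂ + z₂) ^ 2)))) /
          ((η₁ + z₁) ^ 2 + (η₂ + z₂) ^ 2 + 1 - ε ^ 2)) ≤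
      -(k₁ - 1 - k₃ / (2 * ε ^ 2)) * z₁ ^ 2
        - (k₂ - 1 - k₃ / (2 * ε ^ 2)) * z₂ ^ 2
        - k₃ * z₃ ^ 2 /
          (8 * ((e_u ^ 2 + e_v ^ 2 + z₁ ^ 2 + z₂ ^ 2 + z₃ ^ 2) / 2) + 6 * (1 - ε ^ 2))
        - (k_u - k₁ ^ 2 * c_u ^ 2 / (2 * g ^ 2) - g ^ 2 / 2) * e_u ^ 2
        - (k_v - k₂ ^ 2 * c_u ^ 2 / (2 * g ^ 2) - g ^ 2 / 2) * e_v ^ 2 := by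
  have hε2 : ε ^ 2 < 1 := by nlinarith
  have hε2' : 0 < ε ^ 2 := by positivity
  refine ⟨by linarith, by linarith, by linarith, by linarith, ?_⟩
  intro e_u e_v z₁ z₂ z₃ c η₁ η₂ η₃ hc1 hc2 hη hη₃
  have hc0 : 0 ≤ c := le_trans hcl hc1
  set w : ℝ := (η₁ + z₁) ^ 2 + (η₂ + z₂) ^ 2 with hw_def
  have hw : 0 ≤ w := by rw [hw_def]; positivity
  rw [sat_eq_min ε w hw hε2]
  set s : ℝ := min w (1 - ε ^ 2) with hs_def
  have hs0 : 0 ≤ s := le_min hw (by linarith)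
  have hs1 : s ≤ 1 - ε ^ 2 := min_le_right _ _
  set p : ℝ := η₁ ^ 2 + η₂ ^ 2 with hp_def
  have hη₃1 : η₃ ≤ 1 := by nlinarith
  have hp1 : p ≤ 1 - ε ^ 2 := by rw [hp_def]; nlinarith
  have hp0 : 0 ≤ p := by rw [hp_def]; positivity
  set b : ℝ := 1 - s with hb_def
  have hbε : ε ^ 2 ≤ b := by rw [hb_def]; linarith
  have hb0 : 0 ≤ b := by linarith
  have hsqb : Real.sqrt b ^ 2 = b := Real.sq_sqrt hb0
  have hsqbε : ε ≤ Real.sqrt b := by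
    have := Real.sqrt_le_sqrt hbε
    rwa [Real.sqrt_sq hε0.le] at this
  set A : ℝ := η₃ - Real.sqrt b with hA_def
  set B : ℝ := w + 1 - ε ^ 2 with hB_def
  have hB : 0 < B := by rw [hB_def]; linarith
  set dnm : ℝ := 8 * ((e_u ^ 2 + e_v ^ 2 + z₁ ^ 2 + z₂ ^ 2 + z₃ ^ 2) / 2) + 6 * (1 - ε ^ 2)
    with hdnm_def
  have hdnm : 0 < dnm := by
    rw [hdnm_def]
    linarith [sq_nonneg e_u, sq_nonneg e_v, sq_nonneg z₁, sq_nonneg z₂, sq_nonneg z₃]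
  have hwp2 : w ≤ 2 * p + 2 * (z₁ ^ 2 + z₂ ^ 2) := by
    rw [hw_def, hp_def]
    linarith [two_sq η₁ z₁, two_sq η₂ z₂]
  have h2B : 2 * B ≤ dnm := by
    rw [hdnm_def, hB_def]
    linarith [sq_nonneg e_u, sq_nonneg e_v, sq_nonneg z₃, hp1, hwp2]
  -- key identity A*(η₃+√b) = s - p
  have hkeyA : A * (η₃ + Real.sqrt b) = s - p := by
    have h3 : η₃ ^ 2 = 1 - p := by rw [hp_def]; linarith
    have : A * (η₃ + Real.sqrt b) = η₃ ^ 2 - Real.sqrt b ^ 2 := by rw [hA_def]; ring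
    rw [this, h3, hsqb, hb_def]; ring
  have hA2 : A ^ 2 * (4 * ε ^ 2) ≤ (s - p) ^ 2 := by
    have h4 : 2 * ε ≤ η₃ + Real.sqrt b := by linarith
    have h5 : (2 * ε) * (2 * ε) ≤ (η₃ + Real.sqrt b) * (η₃ + Real.sqrt b) :=
      mul_le_mul h4 h4 (by linarith) (by linarith)
    have h6 := mul_le_mul_of_nonneg_left h5 (sq_nonneg A)
    have h7 : (s - p) ^ 2 = A ^ 2 * ((η₃ + Real.sqrt b) * (η₃ + Real.sqrt b)) := by
      rw [← hkeyA]; ring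
    rw [h7]
    linarith [h6]
  have hsp : (s - p) ^ 2 ≤ (w - p) ^ 2 := by
    rcases le_total w (1 - ε ^ 2) with h | h
    · have : s = w := by rw [hs_def, min_eq_left h]
      rw [this]
    · have hsv : s = 1 - ε ^ 2 := by rw [hs_def, min_eq_right h]
      have h1 : 0 ≤ s - p := by rw [hsv]; linarith
      have h2 : s - p ≤ w - p := by rw [hsv]; linarith
      exact pow_le_pow_left₀ h1 h2 2
  have hCS : (w - p) ^ 2 ≤ 2 * B * (z₁ ^ 2 + z₂ ^ 2) := by
    have hwp : w - p = (2 * η₁ + z₁) * z₁ + (2 * η₂ + z₂) * z₂ := by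
      rw [hw_def, hp_def]; ring
    have hcs : ((2 * η₁ + z₁) * z₁ + (2 * η₂ + z₂) * z₂) ^ 2 ≤
        ((2 * η₁ + z₁) ^ 2 + (2 * η₂ + z₂) ^ 2) * (z₁ ^ 2 + z₂ ^ 2) := by
      exact cs_two (2 * η₁ + z₁) (2 * η₂ + z₂) z₁ z₂
    have hBB : (2 * η₁ + z₁) ^ 2 + (2 * η₂ + z₂) ^ 2 ≤ 2 * B := by
      rw [hB_def, hw_def]
      linarith [bb_aux η₁ η₂ z₁ z₂ (1 - ε ^ 2) (by linarith [hp_def ▸ hp1])]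
    calc (w - p) ^ 2 = ((2 * η₁ + z₁) * z₁ + (2 * η₂ + z₂) * z₂) ^ 2 := by rw [hwp]
      _ ≤ ((2 * η₁ + z₁) ^ 2 + (2 * η₂ + z₂) ^ 2) * (z₁ ^ 2 + z₂ ^ 2) := hcs
      _ ≤ 2 * B * (z₁ ^ 2 + z₂ ^ 2) :=
          mul_le_mul_of_nonneg_right hBB (by positivity)
  have hAB : A ^ 2 / (2 * B) ≤ (z₁ ^ 2 + z₂ ^ 2) / (4 * ε ^ 2) := by
    rw [div_le_div_iff₀ (by linarith) (by positivity)]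
    linarith [hA2, hsp, hCS]
  -- the z₃ term bound
  have hz3 : k₃ * z₃ ^ 2 / dnm - (k₃ / (2 * ε ^ 2) * z₁ ^ 2 + k₃ / (2 * ε ^ 2) * z₂ ^ 2)
      ≤ k₃ * z₃ * ((z₃ + A) / B) := by
    have h1 : z₃ ^ 2 / 2 - A ^ 2 / 2 ≤ z₃ * (z₃ + A) := half_sq z₃ A
    have h2 : (z₃ ^ 2 / 2 - A ^ 2 / 2) / B ≤ z₃ * (z₃ + A) / B := by gcongr
    have h3 : z₃ ^ 2 / dnm ≤ z₃ ^ 2 / (2 * B) := by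
      rw [div_le_div_iff₀ hdnm (by linarith)]
      exact mul_le_mul_of_nonneg_left h2B (sq_nonneg z₃)
    have h4 : (z₃ ^ 2 / 2 - A ^ 2 / 2) / B = z₃ ^ 2 / (2 * B) - A ^ 2 / (2 * B) := by
      field_simp
    have h5 : z₃ ^ 2 / dnm - (z₁ ^ 2 + z₂ ^ 2) / (4 * ε ^ 2) ≤ z₃ * (z₃ + A) / B := by
      linarith
    have h6 := mul_le_mul_of_nonneg_left h5 hk₃.le
    have e1 : k₃ * (z₃ ^ 2 / dnm - (z₁ ^ 2 + z₂ ^ 2) / (4 * ε ^ 2)) =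
        k₃ * z₃ ^ 2 / dnm - k₃ * ((z₁ ^ 2 + z₂ ^ 2) / (4 * ε ^ 2)) := by ring
    have e2 : k₃ * (z₃ * (z₃ + A) / B) = k₃ * z₃ * ((z₃ + A) / B) := by ring
    have e3 : k₃ * ((z₁ ^ 2 + z₂ ^ 2) / (4 * ε ^ 2)) ≤
        k₃ / (2 * ε ^ 2) * z₁ ^ 2 + k₃ / (2 * ε ^ 2) * z₂ ^ 2 := by
      have e4 : k₃ / (2 * ε ^ 2) * z₁ ^ 2 + k₃ / (2 * ε ^ 2) * z₂ ^ 2 =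
          k₃ * ((z₁ ^ 2 + z₂ ^ 2) / (2 * ε ^ 2)) := by ring
      have e5 : (z₁ ^ 2 + z₂ ^ 2) / (4 * ε ^ 2) ≤ (z₁ ^ 2 + z₂ ^ 2) / (2 * ε ^ 2) := by
        rw [div_le_div_iff₀ (by positivity) (by positivity)]
        exact mul_le_mul_of_nonneg_left (by linarith : (2:ℝ) * ε ^ 2 ≤ 4 * ε ^ 2)
          (by positivity)
      rw [e4]
      exact mul_le_mul_of_nonneg_left e5 hk₃.le
    rw [e1, e2] at h6
    linarith
  -- Young inequalities for the cross terms
  have hy1 : g * e_u * z₁ ≤ g ^ 2 / 2 * e_u ^ 2 + z₁ ^ 2 / 2 := by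
    have h1 := young_ineq (g * e_u) z₁
    have h2 : (g * e_u) ^ 2 / 2 = g ^ 2 / 2 * e_u ^ 2 := by ring
    linarith
  have hy2 : g * e_v * z₂ ≤ g ^ 2 / 2 * e_v ^ 2 + z₂ ^ 2 / 2 := by
    have h1 := young_ineq (g * e_v) z₂
    have h2 : (g * e_v) ^ 2 / 2 = g ^ 2 / 2 * e_v ^ 2 := by ring
    linarith
  have hcc : c ^ 2 ≤ c_u ^ 2 := pow_le_pow_left₀ hc0 hc2 2
  have hq1 : (k₁ * c / g) ^ 2 ≤ k₁ ^ 2 * c_u ^ 2 / g ^ 2 := by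
    rw [div_pow, div_le_div_iff₀ (by positivity) (by positivity), mul_pow]
    exact mul_le_mul_of_nonneg_right
      (mul_le_mul_of_nonneg_left hcc (sq_nonneg k₁)) (sq_nonneg g)
  have hq2 : (k₂ * c / g) ^ 2 ≤ k₂ ^ 2 * c_u ^ 2 / g ^ 2 := by
    rw [div_pow, div_le_div_iff₀ (by positivity) (by positivity), mul_pow]
    exact mul_le_mul_of_nonneg_right
      (mul_le_mul_of_nonneg_left hcc (sq_nonneg k₂)) (sq_nonneg g)
  have hy3 : k₁ * c / g * e_u * z₁ ≤ k₁ ^ 2 * c_u ^ 2 / (2 * g ^ 2) * e_u ^ 2 + z₁ ^ 2 / 2 := by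
    have h1 := young_ineq (k₁ * c / g * e_u) z₁
    have h2 : (k₁ * c / g * e_u) ^ 2 = (k₁ * c / g) ^ 2 * e_u ^ 2 := by ring
    have h3 := mul_le_mul_of_nonneg_right hq1 (sq_nonneg e_u)
    have h4 : k₁ ^ 2 * c_u ^ 2 / (2 * g ^ 2) * e_u ^ 2 =
        k₁ ^ 2 * c_u ^ 2 / g ^ 2 * e_u ^ 2 / 2 := by ring
    linarith
  have hy4 : k₂ * c / g * e_v * z₂ ≤ k₂ ^ 2 * c_u ^ 2 / (2 * g ^ 2) * e_v ^ 2 + z₂ ^ 2 / 2 := by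
    have h1 := young_ineq (k₂ * c / g * e_v) z₂
    have h2 : (k₂ * c / g * e_v) ^ 2 = (k₂ * c / g) ^ 2 * e_v ^ 2 := by ring
    have h3 := mul_le_mul_of_nonneg_right hq2 (sq_nonneg e_v)
    have h4 : k₂ ^ 2 * c_u ^ 2 / (2 * g ^ 2) * e_v ^ 2 =
        k₂ ^ 2 * c_u ^ 2 / g ^ 2 * e_v ^ 2 / 2 := by ring
    linarith
  have hce_u : 0 ≤ c * e_u ^ 2 := mul_nonneg hc0 (sq_nonneg e_u)
  have hce_v : 0 ≤ c * e_v ^ 2 := mul_nonneg hc0 (sq_nonneg e_v)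
  linarith [hy1, hy2, hy3, hy4, hz3, hce_u, hce_v]
end

section
/- Let ε ∈ (0, √(2/3)) so that 3(1-ε²) ≥ 1, and let V, W : ℝ → ℝ with W := 3(1-ε²)V + 2V². If V is differentiable, V ≥ 0, and V'(t) ≤ -k₁₀z₁² - k₂₀z₂² - k₃z₃²/(8V(t)+6(1-ε²)) - k_{u0}e_u² - k_{v0}e_v² (with all k's > 0 and e_u, e_v, z₁, z₂, z₃ functions of t with V = (e_u²+e_v²+z₁²+z₂²+z₃²)/2), then W'(t) ≤ -k₁₀z₁² - k₂₀z₂² - (k₃/2)z₃² - k_{u0}e_u² - k_{v0}e_v². -/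
theorem strict_lyapunov_W (ε k₁₀ k₂₀ k₃ ku0 kv0 : ℝ)
    (hε0 : 0 < ε) (hε1 : ε < Real.sqrt (2 / 3))
    (hε3 : 3 * (1 - ε ^ 2) ≥ 1)
    (hk₁₀ : 0 < k₁₀) (hk₂₀ : 0 < k₂₀) (hk₃ : 0 < k₃)
    (hku0 : 0 < ku0) (hkv0 : 0 < kv0)
    (e_u e_v z₁ z₂ z₃ V : ℝ → ℝ)
    (hV : ∀ t, V t = (e_u t ^ 2 + e_v t ^ 2 + z₁ t ^ 2 + z₂ t ^ 2 + z₃ t ^ 2) / 2)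
    (hVdiff : Differentiable ℝ V) (hVpos : ∀ t, 0 ≤ V t)
    (hV' : ∀ t, deriv V t ≤
      -k₁₀ * z₁ t ^ 2 - k₂₀ * z₂ t ^ 2 -
        k₃ * z₃ t ^ 2 / (8 * V t + 6 * (1 - ε ^ 2)) -
        ku0 * e_u t ^ 2 - kv0 * e_v t ^ 2) :
    ∀ t, deriv (fun s => 3 * (1 - ε ^ 2) * V s + 2 * V s ^ 2) t ≤
      -k₁₀ * z₁ t ^ 2 - k₂₀ * z₂ t ^ 2 - (k₃ / 2) * z₃ t ^ 2 -
        ku0 * e_u t ^ 2 - kv0 * e_v t ^ 2 := by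
  intro t
  set c : ℝ := 1 - ε ^ 2 with hc
  clear_value c
  have hc3 : (1 : ℝ) ≤ 3 * c := hε3
  have hcpos : 0 < c := by linarith
  have hVt := hVpos t
  have hD : 0 < 8 * V t + 6 * c := by linarith
  have hderiv : deriv (fun s => 3 * c * V s + 2 * V s ^ 2) t
      = (3 * c + 4 * V t) * deriv V t := by
    have h1 : HasDerivAt V (deriv V t) t := (hVdiff t).hasDerivAt
    have h2 : HasDerivAt (fun s => 3 * c * V s + 2 * V s ^ 2)
        (3 * c * deriv V t + 2 * (2 * V t ^ 1 * deriv V t)) t :=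
      ((h1.const_mul (3 * c)).add ((h1.pow 2).const_mul 2))
    rw [h2.deriv]; ring
  rw [hderiv]
  have ha : (1 : ℝ) ≤ 3 * c + 4 * V t := by linarith
  have ha0 : (0 : ℝ) ≤ 3 * c + 4 * V t := by linarith
  have hmul : (3 * c + 4 * V t) * deriv V t ≤
      (3 * c + 4 * V t) * (-k₁₀ * z₁ t ^ 2 - k₂₀ * z₂ t ^ 2 -
        k₃ * z₃ t ^ 2 / (8 * V t + 6 * c) -
        ku0 * e_u t ^ 2 - kv0 * e_v t ^ 2) :=
    mul_le_mul_of_nonneg_left (hV' t) ha0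
  have hfrac : (3 * c + 4 * V t) * (k₃ * z₃ t ^ 2 / (8 * V t + 6 * c))
      = k₃ / 2 * z₃ t ^ 2 := by
    field_simp
    ring
  have hexp : (3 * c + 4 * V t) * (-k₁₀ * z₁ t ^ 2 - k₂₀ * z₂ t ^ 2 -
        k₃ * z₃ t ^ 2 / (8 * V t + 6 * c) -
        ku0 * e_u t ^ 2 - kv0 * e_v t ^ 2)
      = -((3 * c + 4 * V t) * (k₁₀ * z₁ t ^ 2))
        - (3 * c + 4 * V t) * (k₂₀ * z₂ t ^ 2)
        - k₃ / 2 * z₃ t ^ 2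
        - (3 * c + 4 * V t) * (ku0 * e_u t ^ 2)
        - (3 * c + 4 * V t) * (kv0 * e_v t ^ 2) := by
    rw [← hfrac]; ring
  rw [hexp] at hmul
  have b1 : k₁₀ * z₁ t ^ 2 ≤ (3 * c + 4 * V t) * (k₁₀ * z₁ t ^ 2) :=
    le_mul_of_one_le_left (by positivity) ha
  have b2 : k₂₀ * z₂ t ^ 2 ≤ (3 * c + 4 * V t) * (k₂₀ * z₂ t ^ 2) :=
    le_mul_of_one_le_left (by positivity) ha
  have b3 : ku0 * e_u t ^ 2 ≤ (3 * c + 4 * V t) * (ku0 * e_u t ^ 2) :=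
    le_mul_of_one_le_left (by positivity) ha
  have b4 : kv0 * e_v t ^ 2 ≤ (3 * c + 4 * V t) * (kv0 * e_v t ^ 2) :=
    le_mul_of_one_le_left (by positivity) ha
  linarith
end
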